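/- In the two-horizontal-lines setting, for any non-identity permutation π there is a flip corresponding to an adjacent transposition: there exist i < j with π(i) > π(j) such that the segments a_i b_{π(i)} and a_j b_{π(j)} cross, and replacing them by a_i b_{π(j)} and a_j b_{π(i)} yields the matching of the permutation π ∘ (i j), which has strictly fewer inversions. Consequently there is a flip sequence of length inv(π) from the matching of π to the non-crossing matching. -/

import Mathlib

/-- The number of inversions of a permutation `π` of `Fin n`. -/
def inversions {n : ℕ} (π : Equiv.Perm (Fin n)) : ℕ :=
  (Finset.univ.filter fun p : Fin n × Fin n => p.1 < p.2 ∧ π p.2 < π p.1).card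

/-! A permutation `π ≠ 1` has an adjacent descent `π (i + 1) < π i`. As `x i < x (i + 1)` and
`y (π (i + 1)) < y (π i)`, these two segments cross, and composing with the adjacent transposition
`(i i+1)` removes the inversion `(i, i + 1)` while permuting all others. Induction on the number of
inversions then yields the flip sequence. -/

open Finset

/-- The segments `(a,0)–(b,1)` and `(c,0)–(d,1)` meet at height
`t = (c - a) / ((c - a) + (b - d))`. -/
theorem openSegment_inter_openSegment_nonempty {a b c d : ℝ} (hac : a < c) (hdb : d < b) :
    (openSegment ℝ ((a, 0) : ℝ × ℝ) ((b, 1) : ℝ × ℝ) ∩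
      openSegment ℝ ((c, 0) : ℝ × ℝ) ((d, 1) : ℝ × ℝ)).Nonempty := by
  have hpos : 0 < (c - a) + (b - d) := by linarith
  set t := (c - a) / ((c - a) + (b - d)) with ht
  have ht0 : 0 < t := div_pos (by linarith) hpos
  have ht1 : t < 1 := by rw [ht, div_lt_one hpos]; linarith
  have hmeet : (1 - t) * c + t * d = (1 - t) * a + t * b := by
    rw [ht]; field_simp; ring
  refine ⟨((1 - t) * a + t * b, t), ⟨1 - t, t, by linarith, ht0, by ring, ?_⟩,
    ⟨1 - t, t, by linarith, ht0, by ring, ?_⟩⟩ <;>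
  simp only [Prod.smul_mk, Prod.mk_add_mk, smul_eq_mul, Prod.mk.injEq, hmeet] <;>
  exact ⟨trivial, by ring⟩

namespace Equiv.Perm

variable {n : ℕ}

theorem exists_adjacent_descent_of_ne_one {π : Perm (Fin n)} (hπ : π ≠ 1) :
    ∃ i j : Fin n, (i : ℕ) + 1 = j ∧ π j < π i := by
  cases n with
  | zero => exact absurd (Subsingleton.elim π 1) hπ
  | succ m =>
    rw [Ne, ← π.monotone_iff, Fin.monotone_iff_le_succ] at hπ
    push Not at hπ
    obtain ⟨i, hi⟩ := hπ
    exact ⟨i.castSucc, i.succ, rfl, hi⟩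

theorem swap_apply_lt_swap_apply_iff {i j p q : Fin n} (hij : (i : ℕ) + 1 = j)
    (h₁ : ¬(p = i ∧ q = j)) (h₂ : ¬(p = j ∧ q = i)) :
    swap i j p < swap i j q ↔ p < q := by
  simp only [Fin.ext_iff] at h₁ h₂
  rw [swap_apply_def, swap_apply_def]
  split_ifs <;> simp only [Fin.ext_iff, Fin.lt_def] at * <;> omega

def inversionSet (π : Perm (Fin n)) : Finset (Fin n × Fin n) :=
  univ.filter fun p => p.1 < p.2 ∧ π p.2 < π p.1

theorem inversions_eq_card_inversionSet (π : Perm (Fin n)) :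
    inversions π = #(inversionSet π) := rfl

theorem mem_inversionSet {π : Perm (Fin n)} {p : Fin n × Fin n} :
    p ∈ inversionSet π ↔ p.1 < p.2 ∧ π p.2 < π p.1 := by
  simp [inversionSet]

theorem inversions_one : inversions (1 : Perm (Fin n)) = 0 := by
  rw [inversions_eq_card_inversionSet, card_eq_zero, eq_empty_iff_forall_notMem]
  exact fun p hp => lt_asymm (mem_inversionSet.1 hp).1 (mem_inversionSet.1 hp).2

theorem map_inversionSet_mul_swap {π : Perm (Fin n)} {i j : Fin n} (hij : (i : ℕ) + 1 = j)
    (hd : π j < π i) :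
    (inversionSet (π * swap i j)).map (prodCongr (swap i j) (swap i j)).toEmbedding =
      (inversionSet π).erase (i, j) := by
  have hlt : i < j := Fin.lt_def.2 (by omega)
  ext ⟨p, q⟩
  simp only [mem_map_equiv, prodCongr_symm, symm_swap, prodCongr_apply, Prod.map,
    mem_inversionSet, mem_erase, ne_eq, Prod.mk.injEq, coe_mul, Function.comp_apply,
    swap_apply_self]
  by_cases hpq : p = i ∧ q = j
  · obtain ⟨rfl, rfl⟩ := hpq
    simp [hlt.not_gt]
  by_cases hqp : p = j ∧ q = i
  · obtain ⟨rfl, rfl⟩ := hqp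
    simp [hd.not_gt, hlt.not_gt]
  rw [swap_apply_lt_swap_apply_iff hij hpq hqp]
  tauto

theorem inversions_mul_swap_add_one {π : Perm (Fin n)} {i j : Fin n} (hij : (i : ℕ) + 1 = j)
    (hd : π j < π i) : inversions (π * swap i j) + 1 = inversions π := by
  have hlt : i < j := Fin.lt_def.2 (by omega)
  have hmem : (i, j) ∈ inversionSet π := mem_inversionSet.2 ⟨hlt, hd⟩
  rw [inversions_eq_card_inversionSet, inversions_eq_card_inversionSet, ← card_map,
    map_inversionSet_mul_swap hij hd, card_erase_add_one hmem]

end Equiv.Perm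

theorem exists_chain_of_forall_exists_step {α : Type*} (r : α → α → Prop) (μ : α → ℕ) {a₀ : α}
    (h₀ : μ a₀ = 0) (hstep : ∀ a, a ≠ a₀ → ∃ b, r a b ∧ μ b + 1 = μ a) (a : α) :
    ∃ f : ℕ → α, f 0 = a ∧ f (μ a) = a₀ ∧ ∀ k < μ a, r (f k) (f (k + 1)) := by
  induction hm : μ a generalizing a with
  | zero =>
    obtain rfl : a = a₀ := by
      by_contra hne
      obtain ⟨b, -, hb⟩ := hstep a hne
      omega
    exact ⟨fun _ => a, rfl, rfl, fun k hk => absurd hk (Nat.not_lt_zero k)⟩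
  | succ m ih =>
    have hne : a ≠ a₀ := by rintro rfl; omega
    obtain ⟨b, hab, hb⟩ := hstep a hne
    obtain ⟨g, hg0, hgm, hg⟩ := ih b (by omega)
    refine ⟨fun | 0 => a | k + 1 => g k, rfl, hgm, fun k hk => ?_⟩
    cases k with
    | zero => simpa [hg0] using hab
    | succ k => exact hg k (by omega)

def IsFlip {n : ℕ} (x y : Fin n → ℝ) (σ τ : Equiv.Perm (Fin n)) : Prop :=
  ∃ i j : Fin n, i < j ∧ σ j < σ i ∧
    (openSegment ℝ ((x i, 0) : ℝ × ℝ) ((y (σ i), 1) : ℝ × ℝ) ∩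
      openSegment ℝ ((x j, 0) : ℝ × ℝ) ((y (σ j), 1) : ℝ × ℝ)).Nonempty ∧
    τ = σ * Equiv.swap i j

theorem exists_crossing_flip {n : ℕ} {x y : Fin n → ℝ} (hx : StrictMono x) (hy : StrictMono y)
    {π : Equiv.Perm (Fin n)} (hπ : π ≠ 1) :
    ∃ i j : Fin n, i < j ∧ π j < π i ∧
      (openSegment ℝ ((x i, 0) : ℝ × ℝ) ((y (π i), 1) : ℝ × ℝ) ∩
        openSegment ℝ ((x j, 0) : ℝ × ℝ) ((y (π j), 1) : ℝ × ℝ)).Nonempty ∧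
      inversions (π * Equiv.swap i j) + 1 = inversions π := by
  obtain ⟨i, j, hij, hd⟩ := π.exists_adjacent_descent_of_ne_one hπ
  have hlt : i < j := Fin.lt_def.2 (by omega)
  exact ⟨i, j, hlt, hd, openSegment_inter_openSegment_nonempty (hx hlt) (hy hd),
    Equiv.Perm.inversions_mul_swap_add_one hij hd⟩

/-- In the two-horizontal-lines setting (`aᵢ = (xᵢ, 0)`, `bⱼ = (yⱼ, 1)`,
matched by a permutation `π`): if `π` is not the identity, there exist `i < j`
with `π i > π j` whose segments cross, such that flipping them yields the
matching of `π ∘ (i j)`, which has strictly fewer inversions.  Consequently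
there is a flip sequence of length `inversions π` reaching the non-crossing
matching (of the identity permutation). -/
theorem two_lines_flip_sequence (n : ℕ) (x y : Fin n → ℝ)
    (hx : StrictMono x) (hy : StrictMono y) (π : Equiv.Perm (Fin n)) :
    (π ≠ 1 → ∃ i j : Fin n, i < j ∧ π j < π i ∧
      (openSegment ℝ ((x i, 0) : ℝ × ℝ) ((y (π i), 1) : ℝ × ℝ) ∩
        openSegment ℝ ((x j, 0) : ℝ × ℝ) ((y (π j), 1) : ℝ × ℝ)).Nonempty ∧
      inversions (π * Equiv.swap i j) < inversions π) ∧
    (∃ f : ℕ → Equiv.Perm (Fin n), f 0 = π ∧ f (inversions π) = 1 ∧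
      ∀ k < inversions π, ∃ i j : Fin n, i < j ∧ (f k) j < (f k) i ∧
        (openSegment ℝ ((x i, 0) : ℝ × ℝ) ((y ((f k) i), 1) : ℝ × ℝ) ∩
          openSegment ℝ ((x j, 0) : ℝ × ℝ) ((y ((f k) j), 1) : ℝ × ℝ)).Nonempty ∧
        f (k + 1) = f k * Equiv.swap i j) := by
  refine ⟨fun hπ => ?_, ?_⟩
  · obtain ⟨i, j, hlt, hd, hcross, hinv⟩ := exists_crossing_flip hx hy hπ
    exact ⟨i, j, hlt, hd, hcross, by omega⟩
  · have hflip (σ : Equiv.Perm (Fin n)) (hσ : σ ≠ 1) :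
        ∃ τ, IsFlip x y σ τ ∧ inversions τ + 1 = inversions σ := by
      obtain ⟨i, j, hlt, hd, hcross, hinv⟩ := exists_crossing_flip hx hy hσ
      exact ⟨σ * Equiv.swap i j, ⟨i, j, hlt, hd, hcross, rfl⟩, hinv⟩
    exact exists_chain_of_forall_exists_step (IsFlip x y) inversions
      Equiv.Perm.inversions_one hflip π
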